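/- For any four points P_i = (x_i, y_i) ∈ ℝ² and all (x̂,ŷ) ∈ ℝ²: −x₁₄·φ̂_{0,0}(x̂,ŷ) + x₂₁·φ̂_{1,0}(x̂,ŷ) + x₃₂·φ̂_{1,1}(x̂,ŷ) − x₄₃·φ̂_{0,1}(x̂,ŷ) = (B₁₁(x̂,ŷ), B₁₂(x̂,ŷ)) and −y₁₄·φ̂_{0,0}(x̂,ŷ) + y₂₁·φ̂_{1,0}(x̂,ŷ) + y₃₂·φ̂_{1,1}(x̂,ŷ) − y₄₃·φ̂_{0,1}(x̂,ŷ) = (B₂₁(x̂,ŷ), B₂₂(x̂,ŷ)); equivalently, these combinations equal B(x̂,ŷ)ᵀ(1,0)ᵀ and B(x̂,ŷ)ᵀ(0,1)ᵀ respectively, so the constant fields (1,0) and (0,1) are reproduced under the contravariant transform. -/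
import Mathlib



/-- Entry `B₁₁` of the Jacobian matrix of the bilinear map: `(x₂₁(1−ŷ) + x₃₄(1+ŷ))/4`. -/
noncomputable def B11 (x1 x2 x3 x4 yh : ℝ) : ℝ :=
  ((x2 - x1) * (1 - yh) + (x3 - x4) * (1 + yh)) / 4

/-- Entry `B₁₂`: `(x₄₁(1−x̂) + x₃₂(1+x̂))/4`. -/
noncomputable def B12 (x1 x2 x3 x4 xh : ℝ) : ℝ :=
  ((x4 - x1) * (1 - xh) + (x3 - x2) * (1 + xh)) / 4

/-- Entry `B₂₁`: `(y₂₁(1−ŷ) + y₃₄(1+ŷ))/4`. -/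
noncomputable def B21 (y1 y2 y3 y4 yh : ℝ) : ℝ :=
  ((y2 - y1) * (1 - yh) + (y3 - y4) * (1 + yh)) / 4

/-- Entry `B₂₂`: `(y₄₁(1−x̂) + y₃₂(1+x̂))/4`. -/
noncomputable def B22 (y1 y2 y3 y4 xh : ℝ) : ℝ :=
  ((y4 - y1) * (1 - xh) + (y3 - y2) * (1 + xh)) / 4

/-- The Jacobian determinant `J(x̂,ŷ) = det B(x̂,ŷ)` of the bilinear map. -/
noncomputable def Jdet (x1 x2 x3 x4 y1 y2 y3 y4 xh yh : ℝ) : ℝ :=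
  B11 x1 x2 x3 x4 yh * B22 y1 y2 y3 y4 xh - B12 x1 x2 x3 x4 xh * B21 y1 y2 y3 y4 yh

/-- Lowest-order function edge mode `φ̂_{0,0}`. -/
noncomputable def phi00 (z : ℝ × ℝ) : ℝ × ℝ :=
  (z.2 * (z.2 ^ 2 - 1) * (3 * z.1 ^ 2 - 5) / 32,
   -(z.1 * (z.1 ^ 2 - 1) * (3 * z.2 ^ 2 - 5)) / 32 - (z.1 - 1) / 4)

/-- Lowest-order function edge mode `φ̂_{1,0}`. -/
noncomputable def phi10 (z : ℝ × ℝ) : ℝ × ℝ :=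
  (-(z.2 * (z.2 ^ 2 - 1) * (3 * z.1 ^ 2 - 5)) / 32 - (z.2 - 1) / 4,
   z.1 * (z.1 ^ 2 - 1) * (3 * z.2 ^ 2 - 5) / 32)

/-- Lowest-order function edge mode `φ̂_{1,1}`. -/
noncomputable def phi11 (z : ℝ × ℝ) : ℝ × ℝ :=
  (-(z.2 * (z.2 ^ 2 - 1) * (3 * z.1 ^ 2 - 5)) / 32,
   z.1 * (z.1 ^ 2 - 1) * (3 * z.2 ^ 2 - 5) / 32 + (1 + z.1) / 4)

/-- Lowest-order function edge mode `φ̂_{0,1}`. -/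
noncomputable def phi01 (z : ℝ × ℝ) : ℝ × ℝ :=
  (z.2 * (z.2 ^ 2 - 1) * (3 * z.1 ^ 2 - 5) / 32 + (1 + z.2) / 4,
   -(z.1 * (z.1 ^ 2 - 1) * (3 * z.2 ^ 2 - 5)) / 32)

/-- The constant fields `(1,0)` and `(0,1)` are reproduced under the contravariant transform:
`−x₁₄φ̂₀₀ + x₂₁φ̂₁₀ + x₃₂φ̂₁₁ − x₄₃φ̂₀₁ = (B₁₁, B₁₂) = Bᵀ(1,0)ᵀ` and likewise with `y`'s
giving `(B₂₁, B₂₂) = Bᵀ(0,1)ᵀ`. -/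
theorem constants_reproduced (x1 x2 x3 x4 y1 y2 y3 y4 : ℝ) (z : ℝ × ℝ) :
    ((-(x1 - x4)) • phi00 z + (x2 - x1) • phi10 z + (x3 - x2) • phi11 z +
        (-(x4 - x3)) • phi01 z
      = (B11 x1 x2 x3 x4 z.2, B12 x1 x2 x3 x4 z.1)) ∧
    ((-(y1 - y4)) • phi00 z + (y2 - y1) • phi10 z + (y3 - y2) • phi11 z +
        (-(y4 - y3)) • phi01 z
      = (B21 y1 y2 y3 y4 z.2, B22 y1 y2 y3 y4 z.1)) := by
  constructor <;>
    simp only [phi00, phi10, phi11, phi01, B11, B12, B21, B22, Prod.smul_mk, smul_eq_mul,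
      Prod.mk_add_mk, Prod.mk.injEq] <;> constructor <;> ring
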